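/- arXiv:1610.02965 — 10 statements merged into one kernel-verified Lean document; each statement's English description precedes it below -/
import Mathlib

section
/- For nonnegative integers n, k with 0 ≤ k ≤ n, the unsigned Stirling number of the first kind satisfies S1(n,k) = (-1)^{n-k} · Σ_{j=0}^{n-k} (-1)^j · C(n-1+j, n-k+j) · C(2n-k, n-k-j) · S2(n-k+j, j), where S2 denotes the Stirling number of the second kind. -/
/-!
For fixed `m`, `N ↦ S2 (N + m) N` is a polynomial `f_m` of degree at most `2m`: `f_0 = 1`, and
`f_{m+1}` is the polynomial with `f_{m+1} 0 = 0` and `f_{m+1} x - f_{m+1} (x - 1) = x f_m x`, which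
exists because `x ↦ x f_m x` has a polynomial antidifference (built from Bernoulli polynomials).
Running the same recurrence towards negative arguments gives `f_m (-N) = S1 N (N - m)`, so `f_m`
vanishes at `-1, …, -m`. Interpolating `f_m` at the `2m + 1` nodes `-m, …, m` and evaluating at
`-n` therefore only involves the values `f_m j = S2 (m + j) j` for `0 ≤ j ≤ m`, and the Lagrange
weights at `-n` are exactly the signed products of binomial coefficients in the formula.
-/

open Polynomial Finset
open scoped Nat

/-- Unsigned Stirling numbers of the first kind. -/
def S1 : ℕ → ℕ → ℕ
  | 0, 0 => 1
  | 0, _ + 1 => 0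
  | _ + 1, 0 => 0
  | n + 1, k + 1 => n * S1 n (k + 1) + S1 n k

/-- Stirling numbers of the second kind. -/
def S2 : ℕ → ℕ → ℕ
  | 0, 0 => 1
  | 0, _ + 1 => 0
  | _ + 1, 0 => 0
  | n + 1, k + 1 => (k + 1) * S2 n (k + 1) + S2 n k

theorem S1_eq_zero_of_lt {n k : ℕ} (h : n < k) : S1 n k = 0 := by
  induction n generalizing k with
  | zero => obtain ⟨k, rfl⟩ := Nat.exists_eq_succ_of_ne_zero (by omega : k ≠ 0); rfl
  | succ n ih =>
    obtain ⟨k, rfl⟩ := Nat.exists_eq_succ_of_ne_zero (by omega : k ≠ 0)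
    simp [S1, ih (by omega : n < k + 1), ih (by omega : n < k)]

theorem S2_eq_zero_of_lt {n k : ℕ} (h : n < k) : S2 n k = 0 := by
  induction n generalizing k with
  | zero => obtain ⟨k, rfl⟩ := Nat.exists_eq_succ_of_ne_zero (by omega : k ≠ 0); rfl
  | succ n ih =>
    obtain ⟨k, rfl⟩ := Nat.exists_eq_succ_of_ne_zero (by omega : k ≠ 0)
    simp [S2, ih (by omega : n < k + 1), ih (by omega : n < k)]

theorem S1_self (n : ℕ) : S1 n n = 1 := by
  induction n with
  | zero => rfl
  | succ n ih => simp [S1, ih, S1_eq_zero_of_lt (Nat.lt_succ_self n)]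

theorem S2_self (n : ℕ) : S2 n n = 1 := by
  induction n with
  | zero => rfl
  | succ n ih => simp [S2, ih, S2_eq_zero_of_lt (Nat.lt_succ_self n)]

theorem S1_succ_zero (n : ℕ) : S1 (n + 1) 0 = 0 := rfl

namespace Polynomial

theorem natDegree_bernoulli_le (n : ℕ) : (bernoulli n).natDegree ≤ n := by
  rw [bernoulli_def]
  refine natDegree_sum_le_of_forall_le _ _ fun i hi => ?_
  exact (natDegree_monomial_le _).trans (Nat.lt_succ_iff.mp (mem_range.mp hi))

noncomputable def partialSum (p : ℚ[X]) : ℚ[X] :=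
  ∑ k ∈ range (p.natDegree + 1),
    C (p.coeff k / (k + 1)) * ((bernoulli (k + 1)).comp (X + 1) - C ((bernoulli (k + 1)).eval 1))

theorem partialSum_eval_zero (p : ℚ[X]) : (partialSum p).eval 0 = 0 := by
  simp [partialSum, eval_finsetSum]

theorem partialSum_eval_sub_eval_sub_one (p : ℚ[X]) (x : ℚ) :
    (partialSum p).eval x - (partialSum p).eval (x - 1) = p.eval x := by
  rw [eval_eq_sum_range (p := p), partialSum, eval_finsetSum, eval_finsetSum, ← sum_sub_distrib]
  refine sum_congr rfl fun k _ => ?_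
  simp only [eval_mul, eval_C, eval_sub, eval_comp, eval_add, eval_X, eval_one, sub_add_cancel]
  rw [add_comm x, bernoulli_eval_one_add]
  field_simp
  push_cast
  ring

theorem natDegree_partialSum_le (p : ℚ[X]) : (partialSum p).natDegree ≤ p.natDegree + 1 := by
  refine natDegree_sum_le_of_forall_le _ _ fun k hk => ?_
  refine (natDegree_C_mul_le _ _).trans ((natDegree_sub_le _ _).trans ?_)
  rw [natDegree_C, natDegree_comp, ← C_1, natDegree_X_add_C, mul_one, max_eq_left (Nat.zero_le _)]
  exact (natDegree_bernoulli_le _).trans (by simpa using mem_range.mp hk)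

end Polynomial

noncomputable def stirlingPoly : ℕ → ℚ[X]
  | 0 => 1
  | m + 1 => partialSum (X * stirlingPoly m)

theorem natDegree_stirlingPoly_le (m : ℕ) : (stirlingPoly m).natDegree ≤ 2 * m := by
  induction m with
  | zero => simp [stirlingPoly]
  | succ m ih =>
    refine (natDegree_partialSum_le _).trans ?_
    have := (natDegree_mul_le (p := X) (q := stirlingPoly m)).trans (by rw [natDegree_X])
    omega

theorem stirlingPoly_succ_eval_sub (m : ℕ) (x : ℚ) :
    (stirlingPoly (m + 1)).eval x - (stirlingPoly (m + 1)).eval (x - 1) =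
      x * (stirlingPoly m).eval x := by
  rw [stirlingPoly, partialSum_eval_sub_eval_sub_one, eval_mul, eval_X]

theorem stirlingPoly_succ_eval_zero (m : ℕ) : (stirlingPoly (m + 1)).eval 0 = 0 :=
  partialSum_eval_zero _

theorem stirlingPoly_eval_natCast (m N : ℕ) : (stirlingPoly m).eval (N : ℚ) = S2 (N + m) N := by
  induction m generalizing N with
  | zero => simp [stirlingPoly, S2_self]
  | succ m ihm =>
    induction N with
    | zero => simpa [S2] using stirlingPoly_succ_eval_zero m
    | succ N ih =>
      have h := stirlingPoly_succ_eval_sub m (N + 1)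
      rw [add_sub_cancel_right, ih, ← Nat.cast_add_one, ihm] at h
      rw [show N + 1 + (m + 1) = N + m + 1 + 1 by omega, S2]
      rw [show N + 1 + m = N + m + 1 by omega, show N + (m + 1) = N + m + 1 by omega] at h
      push_cast at h ⊢
      linarith

theorem stirlingPoly_eval_neg_natCast_of_lt {m N : ℕ} (h : N < m) :
    (stirlingPoly m).eval (-(N : ℚ)) = 0 := by
  induction m generalizing N with
  | zero => omega
  | succ m ihm =>
    induction N with
    | zero => simpa using stirlingPoly_succ_eval_zero m
    | succ N ih =>
      have h' := stirlingPoly_succ_eval_sub m (-N)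
      rw [ih (by omega), ihm (by omega), ← neg_add'] at h'
      push_cast
      linarith

theorem stirlingPoly_eval_neg_natCast (m k : ℕ) :
    (stirlingPoly m).eval (-((k + m : ℕ) : ℚ)) = S1 (k + m) k := by
  induction m generalizing k with
  | zero => simp [stirlingPoly, S1_self]
  | succ m ihm =>
    have step (k : ℕ) : (stirlingPoly (m + 1)).eval (-((k + (m + 1) : ℕ) : ℚ)) =
        (stirlingPoly (m + 1)).eval (-((k + m : ℕ) : ℚ)) + (k + m) * S1 (k + m) k := by
      have h := stirlingPoly_succ_eval_sub m (-((k + m : ℕ) : ℚ))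
      rw [ihm, ← neg_add'] at h
      push_cast at h ⊢
      rw [← add_assoc]
      linarith
    induction k with
    | zero =>
      have hm : (m : ℚ) * S1 m 0 = 0 := by cases m <;> simp [S1_succ_zero]
      rw [step, stirlingPoly_eval_neg_natCast_of_lt (by omega)]
      simpa [S1_succ_zero] using hm
    | succ k ih =>
      rw [step, show k + 1 + m = k + (m + 1) by omega, ih,
        show k + 1 + (m + 1) = k + (m + 1) + 1 by omega, S1]
      push_cast
      ring

theorem stirlingPoly_eval_neg_natCast_eq_zero {m N : ℕ} (hN : 0 < N) (hNm : N ≤ m) :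
    (stirlingPoly m).eval (-(N : ℚ)) = 0 := by
  rcases hNm.lt_or_eq with h | rfl
  · exact stirlingPoly_eval_neg_natCast_of_lt h
  · obtain ⟨N, rfl⟩ := Nat.exists_eq_add_of_lt hN
    simpa [S1_succ_zero] using stirlingPoly_eval_neg_natCast (0 + N + 1) 0

theorem prod_erase_range_natCast_sub {K : Type*} [Field K] {N i : ℕ} (hi : i ≤ N) :
    ∏ l ∈ (range (N + 1)).erase i, ((i : K) - l) = (-1) ^ (N - i) * i ! * (N - i)! := by
  have hsplit : (range (N + 1)).erase i = range i ∪ Ico (i + 1) (N + 1) := by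
    ext l; simp only [mem_erase, mem_range, mem_union, mem_Ico]; omega
  have hbelow : ∏ l ∈ range i, ((i : K) - l) = i ! := by
    rw [← Nat.descFactorial_self, Nat.descFactorial_eq_prod_range, Nat.cast_prod]
    exact prod_congr rfl fun l hl => by rw [Nat.cast_sub (mem_range.mp hl).le]
  have habove : ∏ l ∈ Ico (i + 1) (N + 1), ((i : K) - l) = (-1) ^ (N - i) * (N - i)! := by
    rw [prod_Ico_eq_prod_range, ← prod_range_add_one_eq_factorial, Nat.cast_prod,
      show N + 1 - (i + 1) = N - i by omega, ← card_range (N - i), ← prod_const, card_range,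
      ← prod_mul_distrib]
    exact prod_congr rfl fun l _ => by push_cast; ring
  have hdisj : Disjoint (range i) (Ico (i + 1) (N + 1)) :=
    disjoint_left.mpr fun l h1 h2 => by simp only [mem_range, mem_Ico] at h1 h2; omega
  rw [hsplit, prod_union hdisj, hbelow, habove]
  ring

theorem Polynomial.eval_eq_lagrange_sum_range_of_natDegree_le {K : Type*} [Field K] [CharZero K]
    {f : K[X]} {N : ℕ} (hf : f.natDegree ≤ N) {a x : K} (hx : ∀ i ≤ N, x ≠ a + i) :
    f.eval x = (∏ i ∈ range (N + 1), (x - (a + i))) *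
      ∑ i ∈ range (N + 1), (-1) ^ (N - i) / (i ! * (N - i)! * (x - (a + i))) * f.eval (a + i) := by
  set v : ℕ → K := fun i => a + i
  have hinj : Set.InjOn v (range (N + 1)) := fun i _ j _ h => by simpa [v] using h
  have hdeg : f.degree < #(range (N + 1)) := by
    rw [card_range]
    exact degree_le_natDegree.trans_lt (by exact_mod_cast Nat.lt_succ_of_le hf)
  have h := Lagrange.eval_interpolate_not_at_node (fun i => f.eval (v i)) (s := range (N + 1))
    (x := x) fun i hi => hx i (Nat.lt_succ_iff.mp (mem_range.mp hi))
  rw [← Lagrange.eq_interpolate hinj hdeg, Lagrange.eval_nodal] at h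
  rw [h]
  congr 1
  refine sum_congr rfl fun i hi => ?_
  have hxi : x - (a + i) ≠ 0 := sub_ne_zero.mpr (hx i (Nat.lt_succ_iff.mp (mem_range.mp hi)))
  simp only [Lagrange.nodalWeight, v, add_sub_add_left_eq_sub, prod_inv_distrib,
    prod_erase_range_natCast_sub (Nat.lt_succ_iff.mp (mem_range.mp hi))]
  field_simp
  rw [← pow_mul, pow_mul', neg_one_sq, one_pow, one_mul]

theorem prod_range_natCast_add_one_add {K : Type*} [Field K] [CharZero K] (e k : ℕ) :
    ∏ i ∈ range k, ((e + 1 + i : ℕ) : K) = (e + k)! / e ! := by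
  rw [eq_div_iff (Nat.cast_ne_zero.mpr e.factorial_ne_zero), ← Nat.cast_prod,
    ← Nat.ascFactorial_eq_prod_range, ← Nat.cast_mul, mul_comm, Nat.factorial_mul_ascFactorial]

theorem prod_range_neg_natCast_sub {n m : ℕ} (hmn : m < n) :
    ∏ i ∈ range (2 * m + 1), (-(n : ℚ) - (-m + i)) = -((n + m)! / (n - m - 1)!) := by
  obtain ⟨e, rfl⟩ := Nat.exists_eq_add_of_lt hmn
  calc _ = ∏ i ∈ range (2 * m + 1), (-1) * ((e + 1 + i : ℕ) : ℚ) :=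
        prod_congr rfl fun i _ => by push_cast; ring
    _ = _ := by
        rw [prod_mul_distrib, prod_const, card_range, prod_range_natCast_add_one_add,
          pow_succ, pow_mul, neg_one_sq, one_pow, show m + e + 1 + m = e + (2 * m + 1) by omega,
          show m + e + 1 - m - 1 = e by omega]
        ring

theorem choose_mul_choose_eq {n m j : ℕ} (hj : j ≤ m) (hmn : m < n) :
    ((n - 1 + j).choose (m + j) * (n + m).choose (m - j) : ℚ) =
      (n + m)! / ((n - m - 1)! * (m + j)! * (m - j)! * (n + j)) := by
  obtain ⟨d, rfl⟩ := Nat.exists_eq_add_of_le hj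
  obtain ⟨e, rfl⟩ := Nat.exists_eq_add_of_lt hmn
  rw [Nat.cast_choose ℚ (by omega), Nat.cast_choose ℚ (by omega),
    show j + d + e + 1 - 1 + j - (j + d + j) = e by omega,
    show j + d + e + 1 + (j + d) - (j + d - j) = (j + d + e + j) + 1 by omega,
    show j + d + e + 1 - (j + d) - 1 = e by omega, Nat.factorial_succ,
    show j + d + e + 1 - 1 + j = j + d + e + j by omega]
  push_cast
  field_simp
  ring

theorem S1_sub_eq_sum_choose_mul_S2 {n m : ℕ} (hmn : m < n) :
    (S1 n (n - m) : ℚ) = (-1) ^ m * ∑ j ∈ range (m + 1), (-1) ^ j *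
      ((n - 1 + j).choose (m + j) : ℚ) * ((n + m).choose (m - j) : ℚ) * S2 (m + j) j := by
  have hnodes : ∀ i ≤ 2 * m, -(n : ℚ) ≠ -m + i := fun i _ h => by
    have : (m : ℚ) < n := by exact_mod_cast hmn
    linarith [(Nat.cast_nonneg i : (0 : ℚ) ≤ i)]
  have hS1 := stirlingPoly_eval_neg_natCast m (n - m)
  rw [Nat.sub_add_cancel hmn.le,
    eval_eq_lagrange_sum_range_of_natDegree_le (natDegree_stirlingPoly_le m) hnodes,
    prod_range_neg_natCast_sub hmn, show 2 * m + 1 = m + (m + 1) by omega, sum_range_add,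
    sum_eq_zero, zero_add] at hS1
  · rw [← hS1, mul_sum, mul_sum]
    refine sum_congr rfl fun j hj => ?_
    have hj : j ≤ m := Nat.lt_succ_iff.mp (mem_range.mp hj)
    rw [Nat.cast_add, neg_add_cancel_left, stirlingPoly_eval_natCast, add_comm j m,
      show 2 * m - (m + j) = m - j by omega]
    have hsign : (-1 : ℚ) ^ m * (-1) ^ j = (-1) ^ (m - j) := by
      rw [← pow_add, show m + j = m - j + 2 * j by omega, pow_add, pow_mul, neg_one_sq, one_pow,
        mul_one]
    have hnj : (n : ℚ) + j ≠ 0 := by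
      exact_mod_cast (Nat.add_pos_left ((Nat.zero_le m).trans_lt hmn) j).ne'
    rw [← neg_add']
    calc _ = (-1) ^ (m - j) * (((n - 1 + j).choose (m + j) : ℚ) * ((n + m).choose (m - j) : ℚ)) *
          S2 (m + j) j := by
          rw [choose_mul_choose_eq hj hmn]
          field_simp
      _ = _ := by rw [← hsign]; ring
  · intro i hi
    have hi : i < m := mem_range.mp hi
    rw [show -(m : ℚ) + i = -((m - i : ℕ) : ℚ) by push_cast [hi.le]; ring,
      stirlingPoly_eval_neg_natCast_eq_zero (by omega) (by omega), mul_zero]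

theorem schlafli_identity (n k : ℕ) (hkn : k ≤ n) :
    (S1 n k : ℤ) = (-1) ^ (n - k) *
      ∑ j ∈ Finset.range (n - k + 1), (-1 : ℤ) ^ j *
        ((n - 1 + j).choose (n - k + j)) * ((2 * n - k).choose (n - k - j)) *
        S2 (n - k + j) j := by
  rcases Nat.eq_zero_or_pos k with rfl | hk
  · rcases n with _ | n
    · rfl
    · simp [S1_succ_zero, Nat.choose_eq_zero_of_lt]
  · have h := S1_sub_eq_sum_choose_mul_S2 (show n - k < n by omega)
    rw [Nat.sub_sub_self hkn, show n + (n - k) = 2 * n - k by omega] at h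
    exact_mod_cast h
end

section
/- For integers n, k, i, j with 0 ≤ j ≤ i ≤ n-k and 0 ≤ k ≤ n, one has C(n, k+i)·C(n, k-j) − C(n, k+i+1)·C(n, k-j-1) = ((i+j+1)/(n+1)) · C(n+1, k-j) · C(n+1, k+i+1). -/
/-- Binomial coefficient for integer arguments: `icho a b = C(a,b)`, equal to `0`
when `b < 0` (unless `a = b`, where it is `1`) or `b > a`. -/
def icho (a b : ℤ) : ℤ :=
  if 0 ≤ b then (if b ≤ a then (a.toNat.choose b.toNat : ℤ) else 0)
  else if a = b then 1 else 0

/-! For `n ≥ 0`, `icho n` is the binomial coefficient extended by zero to all integer lower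
indices, and for every `k : ℤ` it satisfies Pascal's rule and the absorption identities
`(n + 1) C(n, k - 1) = k C(n + 1, k)`, `(n + 1) C(n, k) = (n + 1 - k) C(n + 1, k)` and
`k C(n, k) = (n - k + 1) C(n, k - 1)`. With `a = k + i` and `b = k - j`, the identity is a linear
combination of these four. -/

@[norm_cast]
lemma icho_natCast (N m : ℕ) : icho N m = N.choose m := by
  by_cases h : m ≤ N
  · simp [icho, h]
  · simp [icho, h, Nat.choose_eq_zero_of_lt (not_le.mp h)]

lemma icho_of_neg {n b : ℤ} (hn : 0 ≤ n) (hb : b < 0) : icho n b = 0 := by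
  simp [icho, not_le.mpr hb]
  omega

lemma icho_of_lt {n b : ℤ} (h : n < b) : icho n b = 0 := by
  simp [icho, not_le.mpr h]
  omega

lemma icho_zero_right {n : ℤ} (hn : 0 ≤ n) : icho n 0 = 1 := by
  simp [icho, hn]

lemma Int.lt_zero_or_eq_zero_or_eq_natCast_add_one (k : ℤ) :
    k < 0 ∨ k = 0 ∨ ∃ m : ℕ, k = m + 1 := by
  rcases lt_trichotomy k 0 with h | h | h
  · exact .inl h
  · exact .inr (.inl h)
  · exact .inr (.inr ⟨(k - 1).toNat, by omega⟩)

section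

variable {n : ℤ} (hn : 0 ≤ n)
include hn

lemma add_one_mul_icho_sub_one (k : ℤ) : (n + 1) * icho n (k - 1) = icho (n + 1) k * k := by
  rcases k.lt_zero_or_eq_zero_or_eq_natCast_add_one with hk | rfl | ⟨m, rfl⟩
  · simp (disch := omega) [icho_of_neg]
  · simp (disch := omega) [icho_of_neg]
  · lift n to ℕ using hn
    rw [add_sub_cancel_right]
    exact_mod_cast Nat.add_one_mul_choose_eq n m

lemma icho_mul_add_one (k : ℤ) : icho n k * (n + 1) = icho (n + 1) k * (n + 1 - k) := by
  rcases k.lt_zero_or_eq_zero_or_eq_natCast_add_one with hk | rfl | ⟨m, rfl⟩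
  · simp (disch := omega) [icho_of_neg]
  · simp (disch := omega) [icho_zero_right]
  · lift n to ℕ using hn
    rcases le_or_gt m n with hmn | hmn
    · rw [show (n : ℤ) + 1 - (m + 1) = (n - m : ℕ) by omega, ← Nat.add_sub_add_right n 1 m]
      exact_mod_cast Nat.choose_mul_succ_eq n (m + 1)
    · simp (disch := omega) [icho_of_lt]

lemma icho_add_one_left (k : ℤ) : icho (n + 1) k = icho n (k - 1) + icho n k := by
  rcases k.lt_zero_or_eq_zero_or_eq_natCast_add_one with hk | rfl | ⟨m, rfl⟩
  · simp (disch := omega) [icho_of_neg]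
  · simp (disch := omega) [icho_of_neg, icho_zero_right]
  · lift n to ℕ using hn
    rw [add_sub_cancel_right]
    exact_mod_cast Nat.choose_succ_succ' n m

lemma icho_mul_self (k : ℤ) : icho n k * k = icho n (k - 1) * (n - k + 1) := by
  rcases k.lt_zero_or_eq_zero_or_eq_natCast_add_one with hk | rfl | ⟨m, rfl⟩
  · simp (disch := omega) [icho_of_neg]
  · simp (disch := omega) [icho_of_neg]
  · lift n to ℕ using hn
    rw [add_sub_cancel_right]
    rcases le_or_gt m n with hmn | hmn
    · rw [show (n : ℤ) - (m + 1) + 1 = (n - m : ℕ) by omega]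
      exact_mod_cast Nat.choose_succ_right_eq n m
    · simp (disch := omega) [icho_of_lt]

theorem add_one_mul_icho_mul_icho_sub (a b : ℤ) :
    (n + 1) * (icho n a * icho n b - icho n (a + 1) * icho n (b - 1)) =
      (a - b + 1) * icho (n + 1) b * icho (n + 1) (a + 1) := by
  have eA := add_one_mul_icho_sub_one hn (a + 1)
  have eB := icho_mul_add_one hn (a + 1)
  have eC := icho_add_one_left hn b
  have eD := icho_mul_self hn b
  rw [add_sub_cancel_right] at eA
  linear_combination icho n b * eA - icho n (b - 1) * eB
    - (a - b + 1) * icho (n + 1) (a + 1) * eC + icho (n + 1) (a + 1) * eD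

end

theorem factA_general (n k i j : ℤ) (hk : 0 ≤ k) (hkn : k ≤ n) :
    (n + 1) * (icho n (k + i) * icho n (k - j) - icho n (k + i + 1) * icho n (k - j - 1)) =
      (i + j + 1) * icho (n + 1) (k - j) * icho (n + 1) (k + i + 1) := by
  rw [show i + j + 1 = k + i - (k - j) + 1 by ring]
  exact add_one_mul_icho_mul_icho_sub (by omega) (k + i) (k - j)

theorem factA (n k i j : ℤ) (hj : 0 ≤ j) (hji : j ≤ i) (hik : i ≤ n - k)
    (hk : 0 ≤ k) (hkn : k ≤ n) :
    (n + 1) * (icho n (k + i) * icho n (k - j) - icho n (k + i + 1) * icho n (k - j - 1)) =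
      (i + j + 1) * icho (n + 1) (k - j) * icho (n + 1) (k + i + 1) :=
  factA_general n k i j hk hkn
end

section
/- For integers n, k, i, j with 0 ≤ j ≤ i ≤ n-k and 2 ≤ k ≤ n, one has C(n+j-1, k-1)·C(n-i-1, k-1) − C(n+j, k-1)·C(n-i-2, k-1) = ((i+j+1)/(n+j)) · C(n+j, k-1) · C(n-i-2, k-2). -/
/-!
With `a = n + j - 1`, `b = k - 2`, `c = n - i - 2` all arguments are natural numbers and
`i + j + 1 = a - c`, so the claim becomes an identity between ordinary binomial coefficients
valid for all `a b c : ℕ`. It follows from Pascal's rule `C(c+1,b+1) = C(c,b) + C(c,b+1)` and the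
two absorption identities `(a+1) C(a,b+1) = (a-b) C(a+1,b+1)` and
`(b+1) C(c,b+1) = (c-b) C(c,b)`, read in `ℤ` so that they hold without side conditions.
-/

lemma icho_natCast_s4 (a b : ℕ) : icho a b = a.choose b := by
  rcases le_or_gt b a with h | h
  · simp [icho, h]
  · simp [icho, Nat.choose_eq_zero_of_lt h]

namespace Nat

lemma intCast_choose_mul_succ_eq (n k : ℕ) :
    (n.choose k : ℤ) * (n + 1) = (n + 1).choose k * ((n : ℤ) + 1 - k) := by
  rcases le_or_gt k (n + 1) with h | h
  · have := choose_mul_succ_eq n k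
    zify [h] at this
    exact this
  · simp [choose_eq_zero_of_lt h, choose_eq_zero_of_lt (lt_of_succ_lt h)]

lemma intCast_choose_succ_right_eq (n k : ℕ) :
    (n.choose (k + 1) : ℤ) * (k + 1) = n.choose k * ((n : ℤ) - k) := by
  rcases le_or_gt k n with h | h
  · have := choose_succ_right_eq n k
    zify [h] at this
    exact this
  · simp [choose_eq_zero_of_lt h, choose_eq_zero_of_lt (lt_succ_of_lt h)]

theorem choose_mul_choose_succ_sub_choose_succ_mul_choose (a b c : ℕ) :
    ((a : ℤ) + 1) * (a.choose (b + 1) * (c + 1).choose (b + 1) -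
        (a + 1).choose (b + 1) * c.choose (b + 1)) =
      ((a : ℤ) - c) * (a + 1).choose (b + 1) * c.choose b := by
  have pascal : ((c + 1).choose (b + 1) : ℤ) = c.choose b + c.choose (b + 1) := by
    exact_mod_cast choose_succ_succ c b
  have absorb := intCast_choose_mul_succ_eq a (b + 1)
  push_cast at absorb
  linear_combination ((c + 1).choose (b + 1) : ℤ) * absorb +
    ((a : ℤ) - b) * (a + 1).choose (b + 1) * pascal -
    ((a + 1).choose (b + 1) : ℤ) * intCast_choose_succ_right_eq c b

end Nat

theorem factB_general (n k i j : ℤ) (hj : 0 ≤ j) (hik : i ≤ n - k)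
    (hk : 2 ≤ k) (hkn : k ≤ n) :
    (n + j) * (icho (n + j - 1) (k - 1) * icho (n - i - 1) (k - 1) -
        icho (n + j) (k - 1) * icho (n - i - 2) (k - 1)) =
      (i + j + 1) * icho (n + j) (k - 1) * icho (n - i - 2) (k - 2) := by
  obtain ⟨a, ha⟩ := Int.eq_ofNat_of_zero_le (a := n + j - 1) (by omega)
  obtain ⟨b, hb⟩ := Int.eq_ofNat_of_zero_le (a := k - 2) (by omega)
  obtain ⟨c, hc⟩ := Int.eq_ofNat_of_zero_le (a := n - i - 2) (by omega)
  rw [ha, hb, hc, show n + j = ((a + 1 : ℕ) : ℤ) by push_cast; omega,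
    show k - 1 = ((b + 1 : ℕ) : ℤ) by push_cast; omega,
    show n - i - 1 = ((c + 1 : ℕ) : ℤ) by push_cast; omega,
    show i + j + 1 = (a : ℤ) - c by omega]
  simp only [icho_natCast_s4]
  push_cast
  exact Nat.choose_mul_choose_succ_sub_choose_succ_mul_choose a b c

theorem factB (n k i j : ℤ) (hj : 0 ≤ j) (hji : j ≤ i) (hik : i ≤ n - k)
    (hk : 2 ≤ k) (hkn : k ≤ n) :
    (n + j) * (icho (n + j - 1) (k - 1) * icho (n - i - 1) (k - 1) -
        icho (n + j) (k - 1) * icho (n - i - 2) (k - 1)) =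
      (i + j + 1) * icho (n + j) (k - 1) * icho (n - i - 2) (k - 2) :=
  factB_general n k i j hj hik hk hkn
end

section
/- Define A^{n,k}_{i,j} = C(n,k+i)·C(n,k-j) − C(n,k+i+1)·C(n,k-j-1). Then A^{n-1,k-1}_{i,j-1} + A^{n-1,k-1}_{i,j} + A^{n-1,k-1}_{i+1,j-1} + A^{n-1,k-1}_{i+1,j} = A^{n,k}_{i,j}. -/
/-- The coefficients `A^{n,k}_{i,j}`. -/
def A (n k i j : ℤ) : ℤ :=
  icho n (k + i) * icho n (k - j) - icho n (k + i + 1) * icho n (k - j - 1)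

/-!
Pascal's rule `C(n, m) = C(n-1, m-1) + C(n-1, m)` holds for the integer-indexed binomial `icho`
whenever `n ≥ 1`. The identity is then purely formal: for an arbitrary sequence `c`, the
`2 × 2` minor `c(k+i) c(k-j) - c(k+i+1) c(k-j-1)` of the Pascal transform `m ↦ c(m-1) + c(m)`
expands bilinearly into eight products, which regroup as the four minors of `c` on the left.
-/

theorem icho_pascal {n : ℤ} (hn : 1 ≤ n) (m : ℤ) :
    icho n m = icho (n - 1) (m - 1) + icho (n - 1) m := by
  obtain ⟨n, rfl⟩ : ∃ n' : ℕ, n = n' + 1 := ⟨(n - 1).toNat, by omega⟩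
  unfold icho
  split_ifs <;> try omega
  · obtain ⟨m, rfl⟩ : ∃ m' : ℕ, m = m' + 1 := ⟨(m - 1).toNat, by omega⟩
    have hsucc (a : ℕ) : ((a : ℤ) + 1).toNat = a + 1 := by omega
    simp only [add_sub_cancel_right, Int.toNat_natCast, hsucc, Nat.choose_succ_succ, Nat.cast_add]
  · obtain rfl : m = n + 1 := by omega
    simp
  · obtain rfl : m = 0 := by omega
    simp

def binomMinor (c : ℤ → ℤ) (k i j : ℤ) : ℤ :=
  c (k + i) * c (k - j) - c (k + i + 1) * c (k - j - 1)

theorem binomMinor_pascal (c : ℤ → ℤ) (k i j : ℤ) :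
    binomMinor c (k - 1) i (j - 1) + binomMinor c (k - 1) i j +
        binomMinor c (k - 1) (i + 1) (j - 1) + binomMinor c (k - 1) (i + 1) j =
      binomMinor (fun m => c (m - 1) + c m) k i j := by
  simp only [binomMinor]
  ring_nf

theorem rel4A_general (n k i j : ℤ) (hk : 1 ≤ k) (hkn : k ≤ n) :
    A (n - 1) (k - 1) i (j - 1) + A (n - 1) (k - 1) i j +
      A (n - 1) (k - 1) (i + 1) (j - 1) + A (n - 1) (k - 1) (i + 1) j = A n k i j := by
  have hpascal : icho n = fun m => icho (n - 1) (m - 1) + icho (n - 1) m :=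
    funext (icho_pascal (by omega))
  change _ = binomMinor (icho n) k i j
  rw [hpascal]
  exact binomMinor_pascal (icho (n - 1)) k i j

theorem rel4A (n k i j : ℤ) (hj : 0 ≤ j) (hji : j ≤ i) (hik : i ≤ n - k)
    (hk : 1 ≤ k) (hkn : k ≤ n) :
    A (n - 1) (k - 1) i (j - 1) + A (n - 1) (k - 1) i j +
      A (n - 1) (k - 1) (i + 1) (j - 1) + A (n - 1) (k - 1) (i + 1) j = A n k i j :=
  rel4A_general n k i j hk hkn
end

section
/- For nonnegative integers n, k, i, u with k ≤ n and i + u ≤ n - k, one has Σ_{j=0}^{n-i-u-k} (-1)^j · C(2n-i-k-j, j+k) · C(j+k, k) · C(2n-2j-2k-i, n-j-k-i-u) = C(n+u, k) · C(n-i-u, k). -/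
/-!
Write `n = k + i + u + m`. Trinomial revision turns the `j`-th summand into
`C(m+k, k) · (-1)^j C(m, j) C(B + m - j, m + k)` with `B = n + u`, and the alternating sum of the
last two factors is the `m`-th forward difference of `x ↦ C(x, m + k)` at `B`, namely `C(B, k)`.
-/

open Finset

theorem Nat.choose_mul_choose_mul_choose_eq (N k j t : ℕ) :
    N.choose (j + k) * (j + k).choose k * (N - k - j).choose t =
      N.choose (k + j + t) * (k + j + t).choose k * (j + t).choose j := by
  have hjk : N.choose (j + k) * (j + k).choose k = N.choose k * (N - k).choose j := by
    rw [Nat.choose_mul (by omega), Nat.add_sub_cancel]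
  have hkjt : N.choose (k + j + t) * (k + j + t).choose k =
      N.choose k * (N - k).choose (j + t) := by
    rw [Nat.choose_mul (by omega), show k + j + t - k = j + t by omega]
  have hjt : (N - k).choose (j + t) * (j + t).choose j = (N - k).choose j * (N - k - j).choose t := by
    rw [Nat.choose_mul (by omega), Nat.add_sub_cancel_left]
  rw [hjk, hkjt, mul_assoc, mul_assoc, hjt]

/-- The `m`-th forward difference of `x ↦ C(x, m + r)` is `x ↦ C(x, r)`, read off at `B`. -/
theorem alternating_sum_choose_mul_choose_sub (B m r : ℕ) :
    ∑ j ∈ range (m + 1), (-1 : ℤ) ^ j * m.choose j * (B + m - j).choose (m + r) = B.choose r := by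
  have h := congr_fun (fwdDiff_iter_choose r m) B
  rw [fwdDiff_iter_eq_sum_shift, ← sum_range_reflect] at h
  rw [← h]
  refine sum_congr rfl fun j hj => ?_
  have hj : j ≤ m := mem_range_succ_iff.mp hj
  rw [Nat.add_sub_cancel, Nat.sub_sub_self hj, Nat.choose_symm hj, smul_eq_mul, smul_eq_mul,
    mul_one, ← Nat.add_sub_assoc hj]

theorem E_summand_eq {n k i u m j : ℕ} (hn : n = k + i + u + m) (hj : j ≤ m) :
    (-1 : ℤ) ^ j * ((2 * n - i - k - j).choose (j + k)) * ((j + k).choose k) *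
        ((2 * n - 2 * j - 2 * k - i).choose (n - j - k - i - u)) =
      (k + m).choose k * ((-1 : ℤ) ^ j * m.choose j * (n + u + m - j).choose (m + k)) := by
  obtain ⟨t, rfl⟩ : ∃ t, m = j + t := ⟨m - j, by omega⟩
  set N := 2 * n - i - k - j
  have hrev : ((N.choose (j + k) * (j + k).choose k * (N - k - j).choose t : ℕ) : ℤ) = _ :=
    congrArg _ (Nat.choose_mul_choose_mul_choose_eq N k j t)
  push_cast at hrev
  rw [show 2 * n - 2 * j - 2 * k - i = N - k - j by omega, show n - j - k - i - u = t by omega,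
    show n + u + (j + t) - j = N by omega, show j + t + k = k + j + t by omega,
    show k + (j + t) = k + j + t by omega]
  linear_combination (-1 : ℤ) ^ j * hrev

theorem E_eval (n k i u : ℕ) (hk : k ≤ n) (hiu : i + u ≤ n - k) :
    ∑ j ∈ Finset.range (n - i - u - k + 1), (-1 : ℤ) ^ j *
        ((2 * n - i - k - j).choose (j + k)) * ((j + k).choose k) *
        ((2 * n - 2 * j - 2 * k - i).choose (n - j - k - i - u)) =
      ((n + u).choose k) * ((n - i - u).choose k) := by
  obtain ⟨m, hn⟩ : ∃ m, n = k + i + u + m := ⟨n - k - i - u, by omega⟩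
  rw [show n - i - u - k = m by omega,
    sum_congr rfl fun j hj => E_summand_eq hn (mem_range_succ_iff.mp hj),
    ← mul_sum, alternating_sum_choose_mul_choose_sub, show n - i - u = k + m by omega,
    mul_comm]
end

section
/- For integers n, k, i with 1 ≤ k ≤ n and 0 ≤ i ≤ n-k, one has Σ_{j=0}^{n-k} (-1)^j · C(n-1+j, n-k+j) · C(2n-k, n-k-j) · C(n-k+j+i-1, j-1) · C(n-k+j-h-1, j-1) evaluated at h = n-k, i.e. Σ_{j=0}^{n-k} (-1)^j · C(n-1+j, n-k+j) · C(2n-k, n-k-j) · C(n-k+j+i-1, j-1) · C(j-1, j-1), equals (-1)^i · C(n, k-i). -/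
/-!
Put `m = n - k`, `i = l + 1` and `u = m + j`. Upper negation turns `(-1)^u C(k-1+u, u)` into the
generalized binomial `C(-k, u)`, so up to the sign `(-1)^m` the sum is
`∑_{u ≤ 2m} C(-k, u) C(k+2m, 2m-u) C(u+l, m+l+1)`, the terms with `u ≤ m` being zero.
Expanding `C(u+l, p) = ∑_q C(u, q) C(l, p-q)` and using
`C(-k, u) C(u, q) = C(-k, q) C(-k-q, u-q)`, Chu–Vandermonde collapses the sum over `u` to
`C(-k, q) C(2m-q, 2m-q) = C(-k, q)`, and a second Vandermonde gives `C(l-k, m+l+1)`, which is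
`(-1)^(m+i) C(n, m+i)` by upper negation.
-/

open Finset

namespace Ring

variable {R : Type*} [CommRing R] [BinomialRing R]

theorem choose_add_eq_sum_range (r s : R) (n : ℕ) :
    choose (r + s) n = ∑ u ∈ range (n + 1), choose r u * choose s (n - u) := by
  rw [add_choose_eq n (Commute.all r s),
    Nat.sum_antidiagonal_eq_sum_range_succ (fun a b => choose r a * choose s b)]

theorem choose_neg_eq_neg_one_pow_mul (r : R) (n : ℕ) :
    choose (-r) n = (-1) ^ n * choose (r + n - 1) n := by
  rw [choose_neg, Units.smul_def, Int.coe_negOnePow_natCast, zsmul_eq_mul]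
  push_cast; rfl

theorem sum_range_choose_mul_choose_mul_choose (a b : R) {n q : ℕ} (hq : q ≤ n) :
    ∑ u ∈ range (n + 1), choose a u * choose b (n - u) * (u.choose q : R) =
      choose a q * choose (a - q + b) (n - q) := by
  obtain ⟨d, rfl⟩ := Nat.exists_eq_add_of_le hq
  have hlow : ∑ u ∈ range q, choose a u * choose b (q + d - u) * (u.choose q : R) = 0 :=
    sum_eq_zero fun u hu => by
      rw [Nat.choose_eq_zero_of_lt (mem_range.mp hu), Nat.cast_zero, mul_zero]
  rw [show q + d + 1 = q + (d + 1) by ring, sum_range_add, hlow, zero_add,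
    Nat.add_sub_cancel_left, choose_add_eq_sum_range, mul_sum]
  refine sum_congr rfl fun w _ => ?_
  have hrev := choose_smul_choose a (Nat.le_add_right q w)
  rw [nsmul_eq_mul, Nat.add_sub_cancel_left] at hrev
  rw [Nat.add_sub_add_left, mul_right_comm, mul_comm _ (Nat.cast _), hrev, mul_assoc]

theorem sum_range_choose_mul_choose_mul_choose_add (a b : R) {n l p : ℕ} (hab : a + b = n)
    (hp : p ≤ n) :
    ∑ u ∈ range (n + 1), choose a u * choose b (n - u) * ((u + l).choose p : R) =
      choose (a + l) p := by
  have hsplit (u : ℕ) : ((u + l).choose p : R) =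
      ∑ q ∈ range (p + 1), (u.choose q : R) * (l.choose (p - q) : R) := by
    rw [Nat.add_choose_eq,
      Nat.sum_antidiagonal_eq_sum_range_succ (fun a b => u.choose a * l.choose b)]
    push_cast; rfl
  simp_rw [hsplit, mul_sum]
  rw [sum_comm, choose_add_eq_sum_range]
  refine sum_congr rfl fun q hq => ?_
  have hqn : q ≤ n := (Nat.lt_succ_iff.mp (mem_range.mp hq)).trans hp
  have hrest : a - q + b = ((n - q : ℕ) : R) := by
    rw [Nat.cast_sub hqn, ← hab]; ring
  simp_rw [← mul_assoc]
  rw [← sum_mul, sum_range_choose_mul_choose_mul_choose a b hqn, hrest, choose_natCast,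
    Nat.choose_self, Nat.cast_one, mul_one, choose_natCast]

end Ring

theorem neg_one_pow_mul_neg_one_pow_add {M : Type*} [Monoid M] [HasDistribNeg M] (m a : ℕ) :
    (-1 : M) ^ m * (-1) ^ (m + a) = (-1) ^ a := by
  rw [← pow_add, ← add_assoc, ← two_mul, pow_add, pow_mul, neg_one_sq, one_pow, one_mul]

theorem icho_natCast_sub (N q : ℕ) : icho N (N - q) = N.choose q := by
  unfold icho
  rcases le_or_gt q N with hqN | hNq
  · rw [if_pos (by omega), if_pos (by omega), show ((N : ℤ) - q).toNat = N - q by omega,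
      Int.toNat_natCast, Nat.choose_symm hqN]
  · rw [if_neg (by omega), if_neg (by omega), Nat.choose_eq_zero_of_lt hNq, Nat.cast_zero]

theorem sum_Icc_eq_neg_one_pow_mul_sum_range (k m l : ℕ) :
    ∑ j ∈ Icc 1 m, (-1 : ℤ) ^ j * ((k + m - 1 + j).choose (m + j)) *
        ((k + 2 * m).choose (m - j)) * ((m + j + l).choose (j - 1)) =
      (-1) ^ m * ∑ u ∈ range (2 * m + 1), Ring.choose (-k : ℤ) u *
        Ring.choose ((k + 2 * m : ℕ) : ℤ) (2 * m - u) * ((u + l).choose (m + l + 1) : ℤ) := by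
  have hlow : ∑ u ∈ range (m + 1), Ring.choose (-k : ℤ) u *
      Ring.choose ((k + 2 * m : ℕ) : ℤ) (2 * m - u) * ((u + l).choose (m + l + 1) : ℤ) = 0 :=
    sum_eq_zero fun u hu => by
      rw [Nat.choose_eq_zero_of_lt (by rw [mem_range] at hu; omega), Nat.cast_zero, mul_zero]
  rw [show 2 * m + 1 = (m + 1) + m by ring, sum_range_add, hlow, zero_add, mul_sum,
    ← Ico_add_one_right_eq_Icc, sum_Ico_eq_sum_range, Nat.add_sub_cancel]
  refine sum_congr rfl fun x hx => ?_
  -- needed because `k + m - 1` truncates when `k + m = 0`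
  have hm : 1 ≤ m := by rw [mem_range] at hx; omega
  rw [Ring.choose_neg_eq_neg_one_pow_mul, Ring.choose_natCast,
    show (k : ℤ) + ((m + 1 + x : ℕ) : ℤ) - 1 = ((k + m - 1 + (1 + x) : ℕ) : ℤ) by
      push_cast; omega,
    Ring.choose_natCast, show m + (1 + x) = m + 1 + x by ring, show 1 + x - 1 = x by omega,
    show m - (1 + x) = 2 * m - (m + 1 + x) by omega,
    Nat.choose_symm_of_eq_add (show m + 1 + x + l = x + (m + l + 1) by ring), add_assoc m 1 x,
    ← neg_one_pow_mul_neg_one_pow_add m (1 + x)]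
  ring

theorem Cbar_top_general (n k i : ℕ) (hi1 : 1 ≤ i)
    (hi : i ≤ n - k) :
    ∑ j ∈ Finset.Icc 1 (n - k), (-1 : ℤ) ^ j *
        ((n - 1 + j).choose (n - k + j)) * ((2 * n - k).choose (n - k - j)) *
        ((n - k + j + i - 1).choose (j - 1)) =
      (-1) ^ i * icho (n : ℤ) ((k : ℤ) - (i : ℤ)) := by
  obtain ⟨m, rfl⟩ : ∃ m, n = k + m := ⟨n - k, by omega⟩
  obtain ⟨l, rfl⟩ : ∃ l, i = l + 1 := ⟨i - 1, by omega⟩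
  have hlm : m + l + 1 ≤ 2 * m := by omega
  have hab : (-k : ℤ) + ((k + 2 * m : ℕ) : ℤ) = ((2 * m : ℕ) : ℤ) := by push_cast; ring
  simp only [Nat.add_sub_cancel_left, ← add_assoc, Nat.add_sub_cancel,
    show 2 * (k + m) - k = k + 2 * m by omega]
  rw [sum_Icc_eq_neg_one_pow_mul_sum_range,
    Ring.sum_range_choose_mul_choose_mul_choose_add _ _ hab hlm,
    show (-k : ℤ) + l = -(k - l) by ring, Ring.choose_neg_eq_neg_one_pow_mul,
    show (k : ℤ) - l + ((m + l + 1 : ℕ) : ℤ) - 1 = ((k + m : ℕ) : ℤ) by push_cast; ring,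
    show (k : ℤ) - ((l + 1 : ℕ) : ℤ) = ((k + m : ℕ) : ℤ) - ((m + l + 1 : ℕ) : ℤ) by
      push_cast; ring,
    icho_natCast_sub, Ring.choose_natCast, ← mul_assoc, add_assoc m l 1,
    neg_one_pow_mul_neg_one_pow_add]

theorem Cbar_top (n k i : ℕ) (hk1 : 1 ≤ k) (hkn : k ≤ n) (hi1 : 1 ≤ i)
    (hi : i ≤ n - k) :
    ∑ j ∈ Finset.Icc 1 (n - k), (-1 : ℤ) ^ j *
        ((n - 1 + j).choose (n - k + j)) * ((2 * n - k).choose (n - k - j)) *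
        ((n - k + j + i - 1).choose (j - 1)) =
      (-1) ^ i * icho (n : ℤ) ((k : ℤ) - (i : ℤ)) :=
  Cbar_top_general n k i hi1 hi
end

section
/- In the ring ℤ[q], for nonnegative integers i, j with j ≤ i, one has q^{i + C(j,2)} · qbinom(i, j) = q^{C(j+2,2)} · qbinom(i, j+1) + q^{C(j+1,2)} · qbinom(i, j) − q^{C(j+2,2)} · qbinom(i-1, j+1) − q^{C(j+1,2)} · qbinom(i-1, j), where C(m,2) = m(m-1)/2 and qbinom denotes the Gaussian binomial coefficient. -/
open Polynomial

/-- Gaussian binomial coefficients in `ℤ[q]`, for natural indices. -/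
noncomputable def qbinN : ℕ → ℕ → Polynomial ℤ
  | _, 0 => 1
  | 0, _ + 1 => 0
  | n + 1, k + 1 => qbinN n k + X ^ (k + 1) * qbinN n (k + 1)

/-- Gaussian binomial coefficients in `ℤ[q]`, extended by `0` outside `0 ≤ k ≤ n`. -/
noncomputable def qbin (n k : ℤ) : Polynomial ℤ :=
  if 0 ≤ k ∧ k ≤ n then qbinN n.toNat k.toNat else 0

/-! Write `i = n + 1` (the case `i = 0` is a direct check). Both Pascal rules combine into
`[n+1, k] - [n, k] = q^(n+1-k) [n, k-1]`; multiplied by `q^k` this reads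
`q^k ([n+1, k] - [n, k]) = q^(n+1) [n, k-1]` and holds for all `k` with no truncated exponent.
Applied at `k = j` and `k = j + 1`, it turns the right-hand side into
`q^(n+1+C(j,2)) ([n, j-1] + q^j [n, j])`, which is the left-hand side by the first Pascal rule. -/

lemma qbinN_zero_right (n : ℕ) : qbinN n 0 = 1 := by
  cases n <;> rfl

lemma qbinN_succ_succ (n k : ℕ) :
    qbinN (n + 1) (k + 1) = qbinN n k + X ^ (k + 1) * qbinN n (k + 1) :=
  rfl

lemma qbinN_eq_zero_of_lt : ∀ {n k : ℕ}, n < k → qbinN n k = 0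
  | 0, _ + 1, _ => rfl
  | n + 1, k + 1, h => by
    rw [qbinN_succ_succ, qbinN_eq_zero_of_lt (by omega), qbinN_eq_zero_of_lt (by omega),
      mul_zero, add_zero]

lemma X_pow_mul_qbinN_succ_succ (n k : ℕ) :
    X ^ (k + 1) * qbinN (n + 1) (k + 1) =
      X ^ (n + 1) * qbinN n k + X ^ (k + 1) * qbinN n (k + 1) := by
  induction n generalizing k with
  | zero => cases k <;> simp [qbinN]
  | succ n ih =>
    cases k with
    | zero =>
      have h := ih 0
      simp only [qbinN_succ_succ, qbinN_zero_right, zero_add, pow_one] at h ⊢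
      linear_combination (X : ℤ[X]) * h
    | succ k =>
      have h₁ := ih k
      have h₂ := ih (k + 1)
      simp only [qbinN_succ_succ] at h₁ h₂ ⊢
      linear_combination (X : ℤ[X]) * h₁ + X ^ (k + 2) * h₂

lemma qbin_natCast (n k : ℕ) : qbin n k = qbinN n k := by
  unfold qbin
  split_ifs with h
  · simp
  · rw [qbinN_eq_zero_of_lt (by omega)]

lemma qbin_eq_zero_of_lt {n k : ℤ} (h : n < k) : qbin n k = 0 :=
  if_neg (by omega)

lemma qbin_eq_zero_of_neg (n : ℤ) {k : ℤ} (h : k < 0) : qbin n k = 0 :=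
  if_neg (by omega)

lemma qbin_zero_right {n : ℤ} (h : 0 ≤ n) : qbin n 0 = 1 := by
  simp [qbin, h, qbinN_zero_right]

lemma qbin_succ (n k : ℕ) : qbin ((n : ℤ) + 1) k = qbin n ((k : ℤ) - 1) + X ^ k * qbin n k := by
  rcases k with _ | k
  · simp (disch := omega) [qbin_zero_right, qbin_eq_zero_of_neg]
  · have h := qbinN_succ_succ n k
    simp only [← qbin_natCast] at h
    push_cast at h ⊢
    simpa using h

lemma X_pow_mul_qbin_succ (n k : ℕ) :
    X ^ k * qbin ((n : ℤ) + 1) k = X ^ (n + 1) * qbin n ((k : ℤ) - 1) + X ^ k * qbin n k := by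
  rcases k with _ | k
  · simp (disch := omega) [qbin_zero_right, qbin_eq_zero_of_neg]
  · have h := X_pow_mul_qbinN_succ_succ n k
    simp only [← qbin_natCast] at h
    push_cast at h ⊢
    simpa using h

theorem qbin_four_term_general (i j : ℕ) :
    X ^ (i + j.choose 2) * qbin (i : ℤ) (j : ℤ) =
      X ^ ((j + 2).choose 2) * qbin (i : ℤ) ((j : ℤ) + 1) +
        X ^ ((j + 1).choose 2) * qbin (i : ℤ) (j : ℤ) -
        X ^ ((j + 2).choose 2) * qbin ((i : ℤ) - 1) ((j : ℤ) + 1) -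
        X ^ ((j + 1).choose 2) * qbin ((i : ℤ) - 1) (j : ℤ) := by
  have choose_succ : (j + 1).choose 2 = j.choose 2 + j := by
    simp [Nat.choose_succ_succ', add_comm]
  have choose_succ_succ : (j + 2).choose 2 = j.choose 2 + j + (j + 1) := by
    simp [Nat.choose_succ_succ', add_comm]
  rcases i with _ | n
  · cases j <;> simp (disch := omega) [qbin_zero_right, qbin_eq_zero_of_lt]
  · have pascal := qbin_succ n j
    have diff := X_pow_mul_qbin_succ n j
    have diff_succ := X_pow_mul_qbin_succ n (j + 1)
    push_cast at diff_succ ⊢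
    simp only [add_sub_cancel_right] at diff_succ ⊢
    rw [choose_succ, choose_succ_succ]
    set c := j.choose 2
    linear_combination X ^ (n + 1 + c) * pascal - X ^ (c + j) * diff_succ - X ^ c * diff

theorem qbin_four_term (i j : ℕ) (h : j ≤ i) :
    X ^ (i + j.choose 2) * qbin (i : ℤ) (j : ℤ) =
      X ^ ((j + 2).choose 2) * qbin (i : ℤ) ((j : ℤ) + 1) +
        X ^ ((j + 1).choose 2) * qbin (i : ℤ) (j : ℤ) -
        X ^ ((j + 2).choose 2) * qbin ((i : ℤ) - 1) ((j : ℤ) + 1) -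
        X ^ ((j + 1).choose 2) * qbin ((i : ℤ) - 1) (j : ℤ) :=
  qbin_four_term_general i j
end

section
/- Define D^{n,k}_{h,i} = Σ_{j=i}^{n-k} (-1)^j · C(n-1+j, n-k+j) · C(2n-k, n-k-j) · A^{n-k+j,j}_{h,i}, where A^{m,l}_{h,i} = C(m, l+h)·C(m, l-i) − C(m, l+h+1)·C(m, l-i-1). Then for 0 ≤ i ≤ h ≤ n-k and 2 ≤ k ≤ n one has D^{n,k}_{h,i} = (-1)^{n+k+h+i} · (C(n+i-1, k-1)·C(n-h-1, k-1) − C(n+i, k-1)·C(n-h-2, k-1)). -/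
open Finset

@[simp, norm_cast]
theorem icho_natCast_s14 (x y : ℕ) : icho x y = x.choose y := by
  unfold icho
  rw [if_pos (by positivity)]
  split_ifs with h
  · simp
  · rw [Nat.choose_eq_zero_of_lt (by omega), Nat.cast_zero]

theorem icho_eq_zero_of_neg {a b : ℤ} (hb : b < 0) (ha : 0 ≤ a) : icho a b = 0 := by
  unfold icho; rw [if_neg (by omega), if_neg (by omega)]

theorem icho_eq_zero_of_lt {a b : ℤ} (hb : 0 ≤ b) (h : a < b) : icho a b = 0 := by
  unfold icho; rw [if_pos hb, if_neg (by omega)]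

theorem icho_succ_right_eq {M : ℤ} (hM : 0 ≤ M) (r : ℤ) :
    icho M (r + 1) * (r + 1) = icho M r * (M - r) := by
  lift M to ℕ using hM
  rcases lt_or_ge r 0 with hr | hr
  · rw [icho_eq_zero_of_neg hr (by positivity)]
    rcases (show r = -1 ∨ r + 1 < 0 by omega) with rfl | hr'
    · ring
    · rw [icho_eq_zero_of_neg hr' (by positivity)]; ring
  lift r to ℕ using hr
  rcases le_or_gt r M with hrM | hrM
  · exact_mod_cast Nat.choose_succ_right_eq M r
  · rw [icho_eq_zero_of_lt (by positivity) (by omega),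
      icho_eq_zero_of_lt (by positivity) (by omega)]
    ring

theorem add_one_mul_icho_eq {M : ℤ} (hM : 0 ≤ M) (r : ℤ) :
    (M + 1) * icho M r = icho (M + 1) (r + 1) * (r + 1) := by
  lift M to ℕ using hM
  rcases lt_or_ge r 0 with hr | hr
  · rw [icho_eq_zero_of_neg hr (by positivity)]
    rcases (show r = -1 ∨ r + 1 < 0 by omega) with rfl | hr'
    · ring
    · rw [icho_eq_zero_of_neg hr' (by positivity)]; ring
  lift r to ℕ using hr
  exact_mod_cast Nat.add_one_mul_choose_eq M r

theorem icho_mul_add_one_eq (x : ℤ) (r : ℕ) :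
    icho x r * (x + 1) = icho (x + 1) r * (x + 1 - r) := by
  rcases lt_or_ge x 0 with hx | hx
  · rw [icho_eq_zero_of_lt (by positivity) (by omega)]
    rcases (show x + 1 < r ∨ x + 1 = r by omega) with h | h
    · rw [icho_eq_zero_of_lt (by positivity) h]; ring
    · rw [h]; ring
  lift x to ℕ using hx
  rcases le_or_gt r (x + 1) with hr | hr
  · exact_mod_cast Nat.choose_mul_succ_eq x r
  · rw [icho_eq_zero_of_lt (by positivity) (by omega),
      icho_eq_zero_of_lt (by positivity) (by omega)]
    ring

def dWeight (m c j : ℕ) : ℤ :=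
  (-1) ^ j * icho (m + c + j) c * icho (2 * m + c + 1) ((m : ℤ) - j)

def dTerm (m c a b j : ℕ) : ℤ :=
  dWeight m c j * icho (m + j) ((j : ℤ) + a) * icho (m + j) ((j : ℤ) - b)

section dTerm

variable {m c a b j : ℕ}

theorem dTerm_eq_zero_of_lt_b (h : j < b) : dTerm m c a b j = 0 := by
  simp only [dTerm, mul_zero,
    icho_eq_zero_of_neg (a := m + j) (b := (j : ℤ) - b) (by omega) (by positivity)]

theorem dTerm_eq_zero_of_lt_a (h : m < a) : dTerm m c a b j = 0 := by
  simp only [dTerm, icho_eq_zero_of_lt (a := m + j) (b := (j : ℤ) + a) (by positivity) (by omega),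
    mul_zero, zero_mul]

theorem dTerm_eq_zero_of_lt_j (h : m < j) : dTerm m c a b j = 0 := by
  simp only [dTerm, dWeight, mul_zero, zero_mul,
    icho_eq_zero_of_neg (a := 2 * m + c + 1) (b := (m : ℤ) - j) (by omega) (by positivity)]

theorem dWeight_succ :
    ((m : ℤ) + j + 1) * (m + c + j + 2) * dWeight m c (j + 1) =
      -((m + c + j + 1) * (m - j)) * dWeight m c j := by
  have e1 := icho_mul_add_one_eq (m + c + j) c
  have e2 := icho_succ_right_eq (M := 2 * m + c + 1) (by positivity) (m - j - 1)
  unfold dWeight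
  push_cast
  linear_combination (norm := ring_nf) (-1) ^ j * congr($e1 * $e2)

theorem dTerm_succ_a :
    ((j : ℤ) + a + 1) * dTerm m c (a + 1) b j = (m - a) * dTerm m c a b j := by
  have e := icho_succ_right_eq (M := m + j) (by positivity) (j + a)
  unfold dTerm
  push_cast
  linear_combination (norm := ring_nf) dWeight m c j * icho (m + j) ((j : ℤ) - b) * e

theorem dTerm_succ_b :
    ((m : ℤ) + b + 1) * dTerm m c a (b + 1) j = (j - b) * dTerm m c a b j := by
  have e := icho_succ_right_eq (M := m + j) (by positivity) (j - b - 1)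
  unfold dTerm
  push_cast
  linear_combination (norm := ring_nf) -dWeight m c j * icho (m + j) ((j : ℤ) + a) * e

theorem dTerm_succ_diag :
    ((j : ℤ) + a + 1) * (m + a + 1) * dTerm m c (a + 1) (a + 1) j =
      (m - a) * (j - a) * dTerm m c a a j := by
  linear_combination (m + a + 1) * dTerm_succ_a (m := m) (c := c) (a := a) (b := a + 1) (j := j) +
    (m - a) * dTerm_succ_b (m := m) (c := c) (a := a) (b := a) (j := j)

theorem dTerm_succ_j :
    ((m : ℤ) + j + 1) * (m + c + j + 2) * (j + a + 1) * (j + 1 - b) * dTerm m c a b (j + 1) =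
      -((m + c + j + 1) * (m - j) * (m + j + 1) ^ 2) * dTerm m c a b j := by
  have hw := dWeight_succ (m := m) (c := c) (j := j)
  have ha := add_one_mul_icho_eq (M := m + j) (by positivity) (j + a)
  have hb := add_one_mul_icho_eq (M := m + j) (by positivity) (j - b)
  unfold dTerm
  push_cast
  linear_combination (norm := ring_nf) congr($hw * $ha.symm * $hb.symm)

theorem dTerm_eq_choose (hj : j ≤ m) :
    dTerm m c a b j =
      (-1) ^ j * ((m + c + j).choose c : ℤ) * ((2 * m + c + 1).choose (m - j) : ℤ) *
        ((m + j).choose (j + a) : ℤ) * icho (m + j) ((j : ℤ) - b) := by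
  rw [dTerm, dWeight, ← Nat.cast_sub hj]
  norm_cast

theorem dTerm_sub_dTerm (hbj : b ≤ j) (hjm : j ≤ m) :
    dTerm m c a b j - dTerm m c (a + 1) (b + 1) j =
      (-1) ^ j * ((m + c + j).choose c : ℤ) * ((2 * m + c + 1).choose (m - j) : ℤ) *
        (((m + j).choose (j + a) * (m + j).choose (j - b) : ℤ) -
          ((m + j).choose (j + a + 1) : ℤ) * icho (m + j) ((j : ℤ) - b - 1)) := by
  have hb : icho (m + j) ((j : ℤ) - b) = ((m + j).choose (j - b) : ℤ) := by
    rw [← Nat.cast_sub hbj]; exact_mod_cast icho_natCast_s14 _ _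
  rw [dTerm_eq_choose hjm, dTerm_eq_choose hjm, hb, ← add_assoc j a 1, Nat.cast_add_one,
    ← sub_sub]
  ring

end dTerm

def dCert (m c a j : ℕ) : ℤ := ((j : ℤ) + m + c + 1) * (j - a) * dTerm m c a a j

theorem dTerm_wz (m c a j : ℕ) :
    ((m : ℤ) + a + 1) ^ 2 * (m + c - a) * dTerm m c (a + 1) (a + 1) j -
        ((m : ℤ) + a + 1) * (m + c + a + 1) * (m - a) * dTerm m c a a j =
      (2 * a + 1) * (dCert m c a (j + 1) - dCert m c a j) := by
  rcases lt_or_ge j a with hja | haj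
  · have hcert : dCert m c a (j + 1) = 0 := by
      obtain hja' | rfl : j + 1 < a ∨ j + 1 = a := by omega
      · simp only [dCert, dTerm_eq_zero_of_lt_b hja', mul_zero]
      · simp only [dCert, sub_self, mul_zero, zero_mul]
    rw [hcert]
    simp only [dCert, dTerm_eq_zero_of_lt_b hja, dTerm_eq_zero_of_lt_b (by omega : j < a + 1)]
    ring
  have p1 := dTerm_succ_diag (m := m) (c := c) (a := a) (j := j)
  have p2 := dTerm_succ_j (m := m) (c := c) (a := a) (b := a) (j := j)
  have hne : ((j : ℤ) + a + 1) * (m + a + 1) *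
      ((m + j + 1) * (m + c + j + 2) * (j + a + 1) * (j + 1 - a)) ≠ 0 := by
    simp only [ne_eq, mul_eq_zero, not_or]; omega
  apply mul_left_cancel₀ hne
  unfold dCert
  push_cast
  linear_combination
    (m + a + 1) ^ 2 * (m + c - a) * ((m + j + 1) * (m + c + j + 2) * (j + a + 1) * (j + 1 - a)) *
        p1 -
      (2 * a + 1) * (j + m + c + 2) * (j + 1 - a) * ((j + a + 1) * (m + a + 1)) * p2

theorem sum_dCert_sub (m c a : ℕ) :
    ∑ j ∈ range (m + 1), (dCert m c a (j + 1) - dCert m c a j) = 0 := by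
  rw [sum_range_sub, dCert, dTerm_eq_zero_of_lt_j (Nat.lt_succ_self m)]
  rcases Nat.eq_zero_or_pos a with rfl | ha
  · simp [dCert]
  · simp [dCert, dTerm_eq_zero_of_lt_b ha]

def dSum (m c a b : ℕ) : ℤ := ∑ j ∈ range (m + 1), dTerm m c a b j

theorem sum_Icc_dTerm {m c a b i : ℕ} (hib : i ≤ b) :
    ∑ j ∈ Icc i m, dTerm m c a b j = dSum m c a b :=
  sum_subset (fun j hj => by simp only [mem_Icc, mem_range] at hj ⊢; omega)
    (fun j hj hj' => dTerm_eq_zero_of_lt_b (by simp only [mem_Icc, mem_range] at hj hj'; omega))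

theorem dSum_succ_diag (m c a : ℕ) :
    ((m : ℤ) + a + 1) ^ 2 * (m + c - a) * dSum m c (a + 1) (a + 1) =
      ((m : ℤ) + a + 1) * (m + c + a + 1) * (m - a) * dSum m c a a := by
  rw [← sub_eq_zero, dSum, dSum, mul_sum, mul_sum, ← sum_sub_distrib,
    ← mul_zero (2 * (a : ℤ) + 1), ← sum_dCert_sub m c a, mul_sum]
  exact sum_congr rfl fun j _ => dTerm_wz m c a j

theorem dSum_contiguous (m c a b : ℕ) :
    ((a : ℤ) + b + 1) * dSum m c (a + 1) b =
      (m - a) * dSum m c a b - (m + b + 1) * dSum m c (a + 1) (b + 1) := by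
  simp only [dSum, mul_sum, ← sum_sub_distrib]
  refine sum_congr rfl fun j _ => ?_
  have e1 := dTerm_succ_a (m := m) (c := c) (a := a) (b := b) (j := j)
  have e2 := dTerm_succ_b (m := m) (c := c) (a := a + 1) (b := b) (j := j)
  linear_combination e1 + e2

theorem dSum_diag {m a : ℕ} (c : ℕ) (ha : a ≤ m) :
    dSum m c a a = (-1) ^ m * icho (m + c + a) c * icho (m + c - a) c := by
  induction ha using Nat.decreasingInduction with
  | self =>
    rw [dSum, sum_eq_single_of_mem m (self_mem_range_succ m)
      (fun j hj hjm => dTerm_eq_zero_of_lt_b (by have := mem_range.mp hj; omega))]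
    simp only [dTerm, dWeight, sub_self, add_sub_cancel_left]
    norm_cast
    simp
  | of_succ a ha ih =>
    have hrec := dSum_succ_diag m c a
    rw [ih] at hrec
    push_cast at hrec
    have u1 := icho_mul_add_one_eq (m + c + a) c
    have u2 := icho_mul_add_one_eq (m + c - a - 1) c
    have hne : ((m : ℤ) + a + 1) * (m + c + a + 1) * (m - a) ≠ 0 := by
      simp only [ne_eq, mul_eq_zero, not_or]; omega
    apply mul_left_cancel₀ hne
    linear_combination (norm := ring_nf) -hrec + (-1) ^ m * (m + a + 1) * congr($u1.symm * $u2)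

theorem dSum_eq {m a b : ℕ} (c : ℕ) (hba : b ≤ a) :
    dSum m c a b = (-1) ^ (m + a + b) * icho (m + c + b) c * icho (m + c - a) c := by
  obtain ⟨d, rfl⟩ := Nat.exists_eq_add_of_le hba
  induction d generalizing b with
  | zero =>
    rcases le_or_gt b m with hbm | hmb
    · rw [add_zero, dSum_diag c hbm, show m + b + b = m + 2 * b by ring, pow_add, pow_mul]
      simp
    · rw [dSum, sum_eq_zero fun j _ => dTerm_eq_zero_of_lt_a (by omega),
        icho_eq_zero_of_lt (a := m + c - (b + 0 : ℕ)) (by positivity) (by omega), mul_zero]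
  | succ d ih =>
    have hrec := dSum_contiguous m c (b + d) b
    have ih' := ih (b := b + 1) le_self_add
    rw [show b + 1 + d = b + d + 1 by ring] at ih'
    rw [ih le_self_add, ih'] at hrec
    push_cast at hrec ⊢
    have u1 := icho_mul_add_one_eq (m + c - (b + d + 1)) c
    have u2 := icho_mul_add_one_eq (m + c + b) c
    apply mul_left_cancel₀ (show ((b : ℤ) + d + b + 1) ≠ 0 by omega)
    linear_combination (norm := ring_nf) hrec -
      (-1) ^ (m + b + d + b) * icho (m + c + b) c * u1 +
      (-1) ^ (m + b + d + b) * icho (m + c - (b + d + 1)) c * u2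

theorem dequalb (n k h i : ℕ) (hih : i ≤ h) (hh : h ≤ n - k) (hk2 : 2 ≤ k)
    (hkn : k ≤ n) :
    ∑ j ∈ Finset.Icc i (n - k), (-1 : ℤ) ^ j *
        ((n - 1 + j).choose (n - k + j)) * ((2 * n - k).choose (n - k - j)) *
        (((n - k + j).choose (j + h) * (n - k + j).choose (j - i) : ℤ) -
          ((n - k + j).choose (j + h + 1) : ℤ) *
            icho ((n : ℤ) - k + j) ((j : ℤ) - i - 1)) =
      (-1) ^ (n + k + h + i) *
        (((n + i - 1).choose (k - 1) * (n - h - 1).choose (k - 1) : ℤ) -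
          ((n + i).choose (k - 1) * (n - h - 2).choose (k - 1) : ℤ)) := by
  obtain ⟨c, rfl⟩ : ∃ c, k = c + 1 := ⟨k - 1, by omega⟩
  obtain ⟨m, rfl⟩ : ∃ m, n = m + (c + 1) := ⟨n - (c + 1), by omega⟩
  simp only [Nat.add_sub_cancel] at hh ⊢
  calc _ = ∑ j ∈ Icc i m, (dTerm m c h i j - dTerm m c (h + 1) (i + 1) j) := by
        refine sum_congr rfl fun j hj => ?_
        obtain ⟨hij, hjm⟩ := mem_Icc.mp hj
        rw [dTerm_sub_dTerm hij hjm,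
          Nat.choose_symm_of_eq_add (show m + (c + 1) - 1 + j = m + j + c by omega),
          show m + (c + 1) - 1 + j = m + c + j by omega,
          show 2 * (m + (c + 1)) - (c + 1) = 2 * m + c + 1 by omega]
        push_cast
        ring_nf
    _ = _ := by
      rw [sum_sub_distrib, sum_Icc_dTerm le_rfl, sum_Icc_dTerm (Nat.le_succ i),
        dSum_eq c hih, dSum_eq c (Nat.add_le_add_right hih 1),
        show (m : ℤ) + c + i = ((m + (c + 1) + i - 1 : ℕ) : ℤ) by omega,
        show (m : ℤ) + c - h = ((m + (c + 1) - h - 1 : ℕ) : ℤ) by omega,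
        show (m : ℤ) + c + ↑(i + 1) = ((m + (c + 1) + i : ℕ) : ℤ) by omega,
        show (m : ℤ) + c - ↑(h + 1) = ((m + (c + 1) - h - 2 : ℕ) : ℤ) by omega,
        show m + (c + 1) + (c + 1) + h + i = m + h + i + 2 * (c + 1) by ring,
        pow_add _ _ (2 * (c + 1)), pow_mul, neg_one_sq, one_pow, mul_one]
      simp only [icho_natCast_s14]
      ring
end

section
/- For nonnegative integers n, k, h, i with 0 ≤ i < h ≤ n-k and k ≥ 2, the quantities D^{n,k}_{h,i} defined by D^{n,k}_{h,i} = Σ_{j=i}^{n-k} (-1)^j · C(n-1+j, n-k+j) · C(2n-k, n-k-j) · (C(n-k+j, j+h)·C(n-k+j, j-i) − C(n-k+j, j+h+1)·C(n-k+j, j-i-1)) satisfy the two-term recurrence (n+i)·(i+h+2)·D^{n,k}_{h,i} = −(h+i+1)·(n-k+i+2)·D^{n,k}_{h,i+1}. -/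
/-- The quantities `D^{n,k}_{h,i}` from the paper. -/
def D (n k h i : ℕ) : ℤ :=
  ∑ j ∈ Finset.Icc i (n - k), (-1 : ℤ) ^ j *
    ((n - 1 + j).choose (n - k + j)) * ((2 * n - k).choose (n - k - j)) *
    (((n - k + j).choose (j + h) * (n - k + j).choose (j - i) : ℤ) -
      ((n - k + j).choose (j + h + 1) : ℤ) * icho ((n : ℤ) - k + j) ((j : ℤ) - i - 1))

/-!
Write `n = N + K + 1` and `k = K + 1`. Then `D^{n,k}_{h,i} = S(h, i) - S(h + 1, i + 1)` for the
single sum `S(h, i) = ∑_{j ≤ N} (-1)^j C(N+K+j, N+j) C(2N+K+1, N-j) C(N+j, j+h) C(N+j, N+i)`.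

The key identity is `∑_j (N+K+1+j) t_j = 0` for the summands `t_j` of `S(h, i)` when `i < h`.
Up to a nonzero constant, `(-1)^l C(2N+K+1, l) P(l)` with `l = N+K+1+j` is its `j`-th summand, where
`P(x) = (x)_{K+1} (x-K-1)_{N-h} (x-K-1)_{N+i}` is a product of falling factorials. `P` vanishes
at `l = 0, …, N+K` and has degree `2N+K+1-(h-i) < 2N+K+1`, so the sum is a `(2N+K+1)`-st finite
difference of `P` and is zero. Together with `C(a, b+1) (b+1) = C(a, b) (a-b)` this gives two
contiguity relations for `S`, one in `i` and one in `h`, and the recurrence is a linear combination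
of three of them.
-/

open Finset Polynomial
open scoped Nat

theorem sum_range_neg_one_pow_mul_choose_mul_eval_eq_zero {R : Type*} [CommRing R] (P : R[X])
    {M : ℕ} (hP : P.natDegree < M) :
    ∑ l ∈ range (M + 1), (-1 : R) ^ l * M.choose l * P.eval (l : R) = 0 := by
  have h := congr_fun (fwdDiff_iter_eq_zero_of_degree_lt hP) 0
  rw [fwdDiff_iter_eq_sum_shift, Pi.zero_apply] at h
  rw [← mul_zero ((-1 : R) ^ M), ← h, mul_sum]
  refine sum_congr rfl fun l hl => ?_
  have hsign : (-1 : R) ^ l = (-1) ^ M * (-1) ^ (M - l) := by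
    have hl : l ≤ M := Nat.le_of_lt_succ (mem_range.mp hl)
    rw [← pow_add, show M + (M - l) = l + 2 * (M - l) by omega, pow_add, pow_mul, neg_one_sq,
      one_pow, mul_one]
  simp only [zsmul_eq_mul, Int.cast_mul, Int.cast_pow, Int.cast_neg, Int.cast_one,
    Int.cast_natCast, nsmul_one, zero_add, hsign]
  ring

theorem cast_choose_succ_right_eq (n k : ℕ) :
    (n.choose (k + 1) : ℤ) * (k + 1) = n.choose k * ((n : ℤ) - k) := by
  rcases le_or_gt k n with hk | hk
  · rw [← Nat.cast_sub hk]
    exact_mod_cast Nat.choose_succ_right_eq n k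
  · simp [Nat.choose_eq_zero_of_lt hk, Nat.choose_eq_zero_of_lt (hk.trans k.lt_succ_self)]

noncomputable def fallingProd (K a b : ℕ) : ℤ[X] :=
  descPochhammer ℤ (K + 1) *
    ((descPochhammer ℤ a).comp (X - C ((K : ℤ) + 1)) *
      (descPochhammer ℤ b).comp (X - C ((K : ℤ) + 1)))

theorem natDegree_fallingProd_le (K a b : ℕ) :
    (fallingProd K a b).natDegree ≤ K + 1 + (a + b) := by
  have hcomp (c : ℕ) : ((descPochhammer ℤ c).comp (X - C ((K : ℤ) + 1))).natDegree = c := by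
    rw [natDegree_comp, descPochhammer_natDegree, natDegree_X_sub_C, mul_one]
  exact natDegree_mul_le.trans (add_le_add (descPochhammer_natDegree ℤ _).le
    (natDegree_mul_le.trans (add_le_add (hcomp a).le (hcomp b).le)))

theorem fallingProd_eval_of_lt (K a b : ℕ) {l : ℕ} (hl : l < K + 1) :
    (fallingProd K a b).eval (l : ℤ) = 0 := by
  simp only [fallingProd, eval_mul, descPochhammer_eval_eq_descFactorial,
    Nat.descFactorial_eq_zero_iff_lt.mpr hl, Nat.cast_zero, zero_mul]

theorem fallingProd_eval_add (K a b m : ℕ) :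
    (fallingProd K a b).eval ((K + 1 + m : ℕ) : ℤ) =
      (K + 1 + m).descFactorial (K + 1) * (m.descFactorial a * m.descFactorial b) := by
  have hshift : ((K + 1 + m : ℕ) : ℤ) - ((K : ℤ) + 1) = m := by push_cast; ring
  simp only [fallingProd, eval_mul, eval_comp, eval_sub, eval_X, eval_C, hshift,
    descPochhammer_eval_eq_descFactorial]

-- `C(N+j, N+i)` stands for the paper's `C(N+j, j-i)`: it vanishes for `j < i`, so sums start at 0.
def altBinomTerm (N K h i j : ℕ) : ℤ :=
  (-1) ^ j * (N + K + j).choose (N + j) * (2 * N + K + 1).choose (N - j) *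
    (N + j).choose (j + h) * (N + j).choose (N + i)

theorem fallingProd_eval_eq_altBinomTerm {N K h i j : ℕ} (hh : h ≤ N) (hj : j ≤ N) :
    (-1 : ℤ) ^ (K + 1 + N + j) * (2 * N + K + 1).choose (K + 1 + N + j) *
        (fallingProd K (N - h) (N + i)).eval ((K + 1 + N + j : ℕ) : ℤ) =
      (-1) ^ (K + 1 + N) * K ! * (N - h)! * (N + i)! *
        (((N : ℤ) + K + 1 + j) * altBinomTerm N K h i j) := by
  have hchoose : (2 * N + K + 1).choose (K + 1 + N + j) = (2 * N + K + 1).choose (N - j) :=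
    Nat.choose_symm_of_eq_add (by omega)
  have hfirst : (K + 1 + N + j).descFactorial (K + 1) =
      (N + K + j + 1) * (K ! * (N + K + j).choose (N + j)) := by
    rw [show K + 1 + N + j = N + K + j + 1 by ring, Nat.succ_descFactorial_succ,
      Nat.descFactorial_eq_factorial_mul_choose,
      Nat.choose_symm_of_eq_add (a := K) (b := N + j) (by ring)]
  have hsecond : (N + j).descFactorial (N - h) = (N - h)! * (N + j).choose (j + h) := by
    rw [Nat.descFactorial_eq_factorial_mul_choose,
      Nat.choose_symm_of_eq_add (a := N - h) (b := j + h) (by omega)]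
  rw [add_assoc (K + 1) N j, fallingProd_eval_add, ← add_assoc, hchoose, hfirst, hsecond,
    Nat.descFactorial_eq_factorial_mul_choose]
  simp only [altBinomTerm, pow_add]
  push_cast
  ring

theorem sum_mul_altBinomTerm_eq_zero {N K h i : ℕ} (hi : i < h) :
    ∑ j ∈ range (N + 1), ((N : ℤ) + K + 1 + j) * altBinomTerm N K h i j = 0 := by
  rcases lt_or_ge N h with hN | hN
  · refine sum_eq_zero fun j _ => ?_
    simp [altBinomTerm, Nat.choose_eq_zero_of_lt (by omega : N + j < j + h)]
  have hdeg : (fallingProd K (N - h) (N + i)).natDegree < 2 * N + K + 1 :=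
    (natDegree_fallingProd_le K _ _).trans_lt (by omega)
  have hlow : ∀ l ∈ range (K + 1), (-1 : ℤ) ^ l * (2 * N + K + 1).choose l *
      (fallingProd K (N - h) (N + i)).eval (l : ℤ) = 0 := fun l hl => by
    rw [fallingProd_eval_of_lt K _ _ (mem_range.mp hl), mul_zero]
  have hmid : ∀ m ∈ range N, (-1 : ℤ) ^ (K + 1 + m) * (2 * N + K + 1).choose (K + 1 + m) *
      (fallingProd K (N - h) (N + i)).eval ((K + 1 + m : ℕ) : ℤ) = 0 := fun m hm => by
    have hm : m < N + i := by have := mem_range.mp hm; omega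
    rw [fallingProd_eval_add, Nat.descFactorial_eq_zero_iff_lt.mpr hm, Nat.cast_zero, mul_zero,
      mul_zero, mul_zero]
  have hsum := sum_range_neg_one_pow_mul_choose_mul_eval_eq_zero _ hdeg
  rw [show 2 * N + K + 1 + 1 = K + 1 + N + (N + 1) by ring, sum_range_add, sum_range_add,
    sum_eq_zero hlow, sum_eq_zero hmid, zero_add, zero_add,
    sum_congr rfl fun j hj =>
      fallingProd_eval_eq_altBinomTerm hN (Nat.le_of_lt_succ (mem_range.mp hj)),
    ← mul_sum] at hsum
  exact (mul_eq_zero.mp hsum).resolve_left (by positivity)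

def altBinomSum (N K h i : ℕ) : ℤ :=
  ∑ j ∈ range (N + 1), altBinomTerm N K h i j

theorem altBinomTerm_succ_right (N K h i j : ℕ) :
    ((N : ℤ) + i + 1) * altBinomTerm N K h (i + 1) j =
      ((j : ℤ) - i) * altBinomTerm N K h i j := by
  have := cast_choose_succ_right_eq (N + j) (N + i)
  push_cast at this
  unfold altBinomTerm
  rw [← add_assoc N i 1]
  linear_combination (-1 : ℤ) ^ j * (N + K + j).choose (N + j) * (2 * N + K + 1).choose (N - j) *
    (N + j).choose (j + h) * this

theorem altBinomTerm_succ_left (N K h i j : ℕ) :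
    ((N : ℤ) - h) * altBinomTerm N K h i j =
      ((j : ℤ) + h + 1) * altBinomTerm N K (h + 1) i j := by
  have := cast_choose_succ_right_eq (N + j) (j + h)
  push_cast at this
  unfold altBinomTerm
  rw [← add_assoc j h 1]
  linear_combination -(-1 : ℤ) ^ j * (N + K + j).choose (N + j) * (2 * N + K + 1).choose (N - j) *
    (N + j).choose (N + i) * this

theorem altBinomSum_contiguity_i {N K h i : ℕ} (hi : i < h) :
    ((N : ℤ) + K + 1 + i) * altBinomSum N K h i +
      ((N : ℤ) + i + 1) * altBinomSum N K h (i + 1) = 0 := by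
  rw [altBinomSum, altBinomSum, mul_sum, mul_sum, ← sum_add_distrib]
  refine (sum_congr rfl fun j _ => ?_).trans (sum_mul_altBinomTerm_eq_zero (K := K) hi)
  linear_combination altBinomTerm_succ_right N K h i j

theorem altBinomSum_contiguity_h {N K h i : ℕ} (hi : i ≤ h) :
    ((N : ℤ) - h) * altBinomSum N K h i +
      ((N : ℤ) - h + K) * altBinomSum N K (h + 1) i = 0 := by
  rw [altBinomSum, altBinomSum, mul_sum, mul_sum, ← sum_add_distrib]
  refine (sum_congr rfl fun j _ => ?_).trans
    (sum_mul_altBinomTerm_eq_zero (K := K) (h := h + 1) (i := i) (Nat.lt_succ_of_le hi))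
  linear_combination altBinomTerm_succ_left N K h i j

theorem icho_natCast_add (m j i : ℕ) :
    icho ((m : ℤ) + j) ((j : ℤ) - i - 1) = (m + j).choose (m + i + 1) := by
  unfold icho
  rcases le_or_gt (i + 1) j with hj | hj
  · obtain ⟨d, rfl⟩ := Nat.exists_eq_add_of_le hj
    have htop : (m : ℤ) + ↑(i + 1 + d) = ((m + (i + 1 + d) : ℕ) : ℤ) := by push_cast; ring
    have hbot : ((i + 1 + d : ℕ) : ℤ) - i - 1 = (d : ℤ) := by push_cast; ring
    rw [if_pos (by omega), if_pos (by omega), htop, hbot, Int.toNat_natCast, Int.toNat_natCast,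
      Nat.choose_symm_of_eq_add (a := d) (b := m + i + 1) (by ring)]
  · rw [if_neg (by omega), if_neg (by omega), Nat.choose_eq_zero_of_lt (by omega), Nat.cast_zero]

theorem D_eq_altBinomSum_sub (N K h i : ℕ) :
    D (N + K + 1) (K + 1) h i = altBinomSum N K h i - altBinomSum N K (h + 1) (i + 1) := by
  have hsub : Icc i N ⊆ range (N + 1) := fun j hj =>
    mem_range.mpr (Nat.lt_succ_of_le (mem_Icc.mp hj).2)
  rw [altBinomSum, altBinomSum, ← sum_sub_distrib, D, show N + K + 1 - (K + 1) = N by omega,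
    ← sum_subset hsub]
  · refine sum_congr rfl fun j hj => ?_
    have hij := (mem_Icc.mp hj).1
    have hpred : N + K + 1 - 1 + j = N + K + j := by omega
    have htwo : 2 * (N + K + 1) - (K + 1) = 2 * N + K + 1 := by omega
    have hcast : ((N + K + 1 : ℕ) : ℤ) - ((K + 1 : ℕ) : ℤ) = N := by push_cast; ring
    rw [hpred, htwo, hcast, icho_natCast_add,
      Nat.choose_symm_of_eq_add (a := j - i) (b := N + i) (by omega), altBinomTerm, altBinomTerm,
      add_assoc N i 1, add_assoc j h 1]
    ring
  · intro j hj hj'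
    have hji : j < i := by simp only [mem_range, mem_Icc] at hj hj'; omega
    simp [altBinomTerm, Nat.choose_eq_zero_of_lt (by omega : N + j < N + i),
      Nat.choose_eq_zero_of_lt (by omega : N + j < N + (i + 1))]

theorem relDi (n k h i : ℕ) (hih : i < h) (hh : h ≤ n - k) (hk2 : 2 ≤ k) :
    ((n : ℤ) + i) * ((i : ℤ) + h + 2) * D n k h i =
      -(((h : ℤ) + i + 1) * ((n : ℤ) - k + i + 2) * D n k h (i + 1)) := by
  obtain ⟨N, K, rfl, rfl⟩ : ∃ N K, n = N + K + 1 ∧ k = K + 1 :=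
    ⟨n - k, k - 1, by omega, by omega⟩
  have r1 := altBinomSum_contiguity_i (N := N) (K := K) hih
  have r2 := altBinomSum_contiguity_h (N := N) (K := K) (i := i + 1) hih
  have r3 := altBinomSum_contiguity_i (N := N) (K := K) (h := h + 1) (i := i + 1) (by omega)
  rw [D_eq_altBinomSum_sub, D_eq_altBinomSum_sub]
  push_cast at r2 r3 ⊢
  linear_combination ((i : ℤ) + h + 2) * r1 - r2 - ((h : ℤ) + i + 1) * r3
end

section
/- For nonnegative integers m and parameters α, γ in a field of characteristic zero with (γ)_m·(γ-α-β)_m ≠ 0: the Pfaff–Saalschütz identity Σ_{j=0}^{m} ((-m)_j (α)_j (β)_j) / ((γ)_j (α+β-γ-m+1)_j · j!) = ((γ-α)_m (γ-β)_m) / ((γ)_m (γ-α-β)_m), where (x)_j = x(x+1)⋯(x+j-1) is the Pochhammer symbol. -/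
/-!
Multiplying the `j`-th summand by `(γ)_m (γ - α - β)_m` turns it into
`C(m, j) (α)_j (β)_j (γ + j)_{m-j} (γ - α - β)_{m-j}`: the reflection
`(α + β - γ - m + 1)_j = (-1)^j (γ - α - β + m - j)_j` cancels the sign of
`(-m)_j = (-1)^j j! C(m, j)`. The theorem thus becomes the polynomial identity
`∑ⱼ C(m, j) (a)_j (b)_j (c + j)_{m-j} (c - a - b)_{m-j} = (c - a)_m (c - b)_m`
over any commutative ring, proved by induction on `m`. Pascal's rule writes each summand of
level `m + 1` through two summands of level `m`, weighted by `(c + m + j)(c - a - b + m - j)` and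
`(a + j)(b + j)`; these weights add up to `(c - a + m)(c - b + m)`, the ratio of consecutive
right-hand sides.
-/

noncomputable def poch {F : Type*} [CommRing F] (x : F) (j : ℕ) : F :=
  (ascPochhammer F j).eval x

open Finset Polynomial
open scoped Nat

section CommRing

variable {R : Type*} [CommRing R]

@[simp]
lemma poch_zero (x : R) : poch x 0 = 1 := by simp [poch]

lemma poch_succ (x : R) (n : ℕ) : poch x (n + 1) = poch x n * (x + n) :=
  ascPochhammer_succ_eval n x

lemma poch_succ_left (x : R) (n : ℕ) : poch x (n + 1) = x * poch (x + 1) n := by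
  simp [poch, ascPochhammer_succ_left, eval_comp]

lemma poch_add (x : R) (n k : ℕ) : poch x (n + k) = poch x n * poch (x + n) k := by
  simp [poch, ← ascPochhammer_mul, eval_comp]

lemma poch_eq_neg_one_pow_mul (x : R) (n : ℕ) : poch x n = (-1) ^ n * poch (-x - n + 1) n := by
  rw [poch, ← neg_neg x, ascPochhammer_eval_neg_eq_descPochhammer,
    descPochhammer_eval_eq_ascPochhammer, neg_neg, poch]

lemma poch_neg_natCast (n j : ℕ) : poch (-(n : R)) j = (-1) ^ j * j ! * n.choose j := by
  rw [poch, ascPochhammer_eval_neg_eq_descPochhammer, descPochhammer_eval_eq_descFactorial,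
    Nat.descFactorial_eq_factorial_mul_choose, Nat.cast_mul, mul_assoc]

noncomputable def saalschutzTerm (a b c : R) (m j : ℕ) : R :=
  m.choose j * poch a j * poch b j * poch (c + j) (m - j) * poch (c - a - b) (m - j)

variable (a b c : R)

lemma saalschutzTerm_of_lt {m j : ℕ} (h : m < j) : saalschutzTerm a b c m j = 0 := by
  simp [saalschutzTerm, Nat.choose_eq_zero_of_lt h]

lemma saalschutzTerm_succ_zero (m : ℕ) :
    saalschutzTerm a b c (m + 1) 0 = (c + m) * (c - a - b + m) * saalschutzTerm a b c m 0 := by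
  simp only [saalschutzTerm, Nat.choose_zero_right, Nat.sub_zero, poch_zero, Nat.cast_zero,
    add_zero, poch_succ, Nat.cast_one]
  ring

lemma saalschutzTerm_succ_succ {m j : ℕ} (hj : j ≤ m) :
    saalschutzTerm a b c (m + 1) (j + 1) =
      (c + m + (j + 1 : ℕ)) * (c - a - b + m - (j + 1 : ℕ)) * saalschutzTerm a b c m (j + 1) +
        (a + j) * (b + j) * saalschutzTerm a b c m j := by
  obtain ⟨k, rfl⟩ := Nat.exists_eq_add_of_le hj
  rcases k with _ | k
  · simp [saalschutzTerm, poch_succ]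
    ring
  · have hchoose :
        ((j + (k + 1)).choose (j + 1) : R) * (j + 1) = (j + (k + 1)).choose j * (k + 1) := by
      have := Nat.choose_succ_right_eq (j + (k + 1)) j
      rw [show j + (k + 1) - j = k + 1 by omega] at this
      simpa using congrArg (Nat.cast : ℕ → R) this
    rw [saalschutzTerm, saalschutzTerm, saalschutzTerm,
      show j + (k + 1) + 1 - (j + 1) = k + 1 by omega, show j + (k + 1) - (j + 1) = k by omega,
      show j + (k + 1) - j = k + 1 by omega,
      Nat.choose_succ_succ, poch_succ a, poch_succ b, poch_succ _ k, poch_succ _ k,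
      poch_succ_left (c + j), show c + ((j + 1 : ℕ) : R) = c + j + 1 by push_cast; ring]
    push_cast
    -- after Pascal's rule, what remains is a common factor times `hchoose`
    linear_combination (-poch a j * (a + j) * poch b j * (b + j) * poch (c + j + 1) k *
      poch (c - a - b) k * (c - a - b + k)) * hchoose

lemma sum_saalschutzTerm_succ (m : ℕ) :
    ∑ j ∈ range (m + 2), saalschutzTerm a b c (m + 1) j =
      (c - a + m) * (c - b + m) * ∑ j ∈ range (m + 1), saalschutzTerm a b c m j := by
  set f : ℕ → R := fun j ↦ (c + m + j) * (c - a - b + m - j) * saalschutzTerm a b c m j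
  set g : ℕ → R := fun j ↦ (a + j) * (b + j) * saalschutzTerm a b c m j
  have hf : f (m + 1) = 0 := by simp [f, saalschutzTerm_of_lt a b c (Nat.lt_succ_self m)]
  calc ∑ j ∈ range (m + 2), saalschutzTerm a b c (m + 1) j
      = ∑ j ∈ range (m + 1), (f (j + 1) + g j) + f 0 := by
        rw [sum_range_succ', saalschutzTerm_succ_zero]
        refine congrArg₂ _ (sum_congr rfl fun j hj ↦ ?_) (by simp [f])
        exact saalschutzTerm_succ_succ a b c (Nat.lt_succ_iff.mp (mem_range.mp hj))
    _ = ∑ j ∈ range (m + 1), (f j + g j) := by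
        rw [sum_add_distrib, sum_add_distrib, add_right_comm, ← sum_range_succ' f,
          sum_range_succ, hf, add_zero]
    _ = (c - a + m) * (c - b + m) * ∑ j ∈ range (m + 1), saalschutzTerm a b c m j := by
        rw [mul_sum]
        exact sum_congr rfl fun j _ ↦ by ring

theorem sum_saalschutzTerm (m : ℕ) :
    ∑ j ∈ range (m + 1), saalschutzTerm a b c m j = poch (c - a) m * poch (c - b) m := by
  induction m with
  | zero => simp [saalschutzTerm]
  | succ m ih =>
    rw [sum_saalschutzTerm_succ, ih, poch_succ (c - a), poch_succ (c - b)]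
    ring

end CommRing

lemma saalschutz_summand_eq {F : Type*} [Field F] [CharZero F] (a b c : F) {m j : ℕ}
    (hj : j ≤ m) (h : poch c m * poch (c - a - b) m ≠ 0) :
    poch (-(m : F)) j * poch a j * poch b j / (poch c j * poch (a + b - c - m + 1) j * j !) =
      saalschutzTerm a b c m j / (poch c m * poch (c - a - b) m) := by
  obtain ⟨k, rfl⟩ := Nat.exists_eq_add_of_le hj
  have hrefl :
      poch (a + b - c - ((j + k : ℕ) : F) + 1) j = (-1) ^ j * poch (c - a - b + k) j := by
    rw [poch_eq_neg_one_pow_mul]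
    congr 2
    push_cast
    ring
  rw [poch_add c j k, add_comm j k, poch_add (c - a - b) k j] at h ⊢
  obtain ⟨⟨hc, -⟩, -, hs⟩ :=
    And.imp mul_ne_zero_iff.mp mul_ne_zero_iff.mp (mul_ne_zero_iff.mp h)
  rw [add_comm k j, hrefl, poch_neg_natCast, saalschutzTerm, Nat.add_sub_cancel_left,
    div_eq_div_iff (by simp [hc, hs, Nat.factorial_ne_zero]) h]
  ring

theorem pfaff_saalschutz_general (F : Type*) [Field F] [CharZero F] (m : ℕ) (α β γ : F)
    (hden : poch γ m * poch (γ - α - β) m ≠ 0) :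
    ∑ j ∈ Finset.range (m + 1),
        (poch (-(m : F)) j * poch α j * poch β j) /
          (poch γ j * poch (α + β - γ - (m : F) + 1) j * (j.factorial : F)) =
      (poch (γ - α) m * poch (γ - β) m) / (poch γ m * poch (γ - α - β) m) := by
  have hterm := fun j (hj : j ∈ range (m + 1)) ↦
    saalschutz_summand_eq α β γ (Nat.lt_succ_iff.mp (mem_range.mp hj)) hden
  rw [sum_congr rfl hterm, ← sum_div, sum_saalschutzTerm]

theorem pfaff_saalschutz (F : Type*) [Field F] [CharZero F] (m : ℕ) (α β γ : F)
    (hγ : ∀ j ≤ m, poch γ j ≠ 0)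
    (hδ : ∀ j ≤ m, poch (α + β - γ - (m : F) + 1) j ≠ 0)
    (hden : poch γ m * poch (γ - α - β) m ≠ 0) :
    ∑ j ∈ Finset.range (m + 1),
        (poch (-(m : F)) j * poch α j * poch β j) /
          (poch γ j * poch (α + β - γ - (m : F) + 1) j * (j.factorial : F)) =
      (poch (γ - α) m * poch (γ - β) m) / (poch γ m * poch (γ - α - β) m) :=
  pfaff_saalschutz_general F m α β γ hden
end
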